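/- Let f be a measurable function on an ergodic invertible dynamical system (X, 𝒳, μ, T) and let q be a fixed integer. The set of points x for which the strict inequality f(T^{-n}x) < f(T^{n+q} x) holds for all n large enough is negligible, that is, μ[⋃_{N>0} ⋂_{n>N} {x : f(T^{-n}x) < f(T^{n+q} x)}] = 0. -/

import Mathlib

/-!
If the set had positive measure, then (after shifting by `T^(N+1)`) so would the set of `y` with
`f (T^j y) < f (T^(p-j) y)` for all `j ≤ 0`, where `p = q + 2(N+1)`, and hence, for some rational level `c`, its part `Ξ`
where `f y ≤ c < f (T^p y)`. Integrating Birkhoff sums gives a point `x` whose visits to `Ξ` along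
`T^m` (with `m > p`) have positive upper density, so Roth's theorem yields visits at times
`k`, `k + d`, `k + 2d` with `d ≥ p`. The mirror inequality at the middle visit, with `j = p - d`,
gives `f (T^(k+p) x) < f (T^(k+2d) x)`, while the outer visits give
`f (T^(k+2d) x) ≤ c < f (T^(k+p) x)`.
-/

open MeasureTheory Filter

open Finset in
theorem exists_threeAP_of_frequently_dense {P : ℕ → Prop} [DecidablePred P] {δ : ℝ}
    (hδ : 0 < δ) (hP : ∃ᶠ n in atTop, δ * n ≤ #{k ∈ range n | P k}) :
    ∃ a d, 0 < d ∧ P a ∧ P (a + d) ∧ P (a + 2 * d) := by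
  obtain ⟨n, hdense, hn⟩ :=
    (hP.and_eventually (eventually_ge_atTop (cornersTheoremBound (δ / 3)))).exists
  have hAP := roth_3ap_theorem_nat δ hδ hn _ (filter_subset P (range n)) hdense
  simp only [ThreeAPFree, coe_filter, Set.mem_ofPred_eq, not_forall] at hAP
  obtain ⟨a, ⟨-, ha⟩, b, ⟨-, hb⟩, c, ⟨-, hc⟩, habc, hab⟩ := hAP
  rcases lt_or_gt_of_ne hab with h | h
  · exact ⟨a, b - a, by omega, ha, by convert hb using 1; omega, by convert hc using 1; omega⟩
  · exact ⟨c, b - c, by omega, hc, by convert hb using 1; omega, by convert ha using 1; omega⟩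

namespace MeasureTheory

variable {X : Type*} [MeasurableSpace X] {μ : Measure X}

theorem exists_frequently_mem_of_le_measure [IsFiniteMeasure μ] {B : ℕ → Set X}
    (hB : ∀ n, MeasurableSet (B n)) {ε : ENNReal} (hε : ε ≠ 0)
    (hεB : ∀ᶠ n in atTop, ε ≤ μ (B n)) : ∃ x, ∃ᶠ n in atTop, x ∈ B n := by
  have htail : Antitone fun N => ⋃ n ≥ N, B n := fun N M hNM =>
    Set.biUnion_mono (fun n hn => le_trans hNM hn) fun _ _ => le_rfl
  have hlimsup : ε ≤ μ (⋂ N, ⋃ n ≥ N, B n) := by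
    rw [htail.measure_iInter (fun N => (MeasurableSet.biUnion (Set.to_countable _)
      fun n _ => hB n).nullMeasurableSet) ⟨0, measure_ne_top _ _⟩]
    obtain ⟨N₀, hN₀⟩ := eventually_atTop.1 hεB
    exact le_iInf fun N => (hN₀ (max N N₀) (le_max_right _ _)).trans
      (measure_mono (Set.subset_biUnion_of_mem (u := B) (le_max_left N N₀)))
  obtain ⟨x, hx⟩ := nonempty_of_measure_ne_zero (ne_bot_of_le_ne_bot hε hlimsup)
  exact ⟨x, frequently_atTop.2 fun N => by simpa using Set.mem_iInter.1 hx N⟩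

theorem integral_le_add_mul_measureReal_le [IsProbabilityMeasure μ] {g : X → ℝ}
    (hg : Measurable g) (hg0 : ∀ x, 0 ≤ g x) {c M : ℝ} (hc : 0 ≤ c) (hgM : ∀ x, g x ≤ M) :
    ∫ x, g x ∂μ ≤ c + M * μ.real {x | c ≤ g x} := by
  set E := {x | c ≤ g x}
  have hE : MeasurableSet E := measurableSet_le measurable_const hg
  have hint : Integrable (fun x => c + E.indicator (fun _ => M) x) μ :=
    (integrable_const c).add ((integrable_const M).indicator hE)
  have hpt : ∀ x, g x ≤ c + E.indicator (fun _ => M) x := by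
    intro x
    by_cases hx : x ∈ E
    · rw [Set.indicator_of_mem hx]; linarith [hgM x]
    · rw [Set.indicator_of_notMem hx, add_zero]; exact (not_le.1 hx).le
  calc ∫ x, g x ∂μ ≤ ∫ x, (c + E.indicator (fun _ => M) x) ∂μ :=
        integral_mono_of_nonneg (.of_forall hg0) hint (.of_forall hpt)
    _ = c + M * μ.real E := by
        rw [integral_add (integrable_const c) ((integrable_const M).indicator hE),
          integral_const, integral_indicator_const M hE]
        simp [mul_comm]

end MeasureTheory

theorem Measurable.birkhoffSum {X M : Type*} [MeasurableSpace X] [AddCommMonoid M]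
    [MeasurableSpace M] [MeasurableAdd₂ M] {S : X → X} (hS : Measurable S) {φ : X → M}
    (hφ : Measurable φ) (n : ℕ) : Measurable (birkhoffSum S φ n) :=
  Finset.measurable_sum _ fun k _ => hφ.comp (hS.iterate k)

open Finset in
theorem birkhoffSum_indicator_one_eq_card {X : Type*} (S : X → X) (A : Set X)
    [DecidablePred (· ∈ A)] (n : ℕ) (x : X) :
    birkhoffSum S (A.indicator (1 : X → ℝ)) n x = #{k ∈ range n | S^[k] x ∈ A} := by
  simp [birkhoffSum, Set.indicator_apply, Finset.sum_boole]

namespace MeasureTheory.MeasurePreserving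

variable {X : Type*} [MeasurableSpace X] {μ : Measure X} {S : X → X}

theorem integral_birkhoffSum {E : Type*} [NormedAddCommGroup E] [NormedSpace ℝ E]
    (hS : MeasurePreserving S μ μ) {φ : X → E} (hφ : Integrable φ μ) (n : ℕ) :
    ∫ x, birkhoffSum S φ n x ∂μ = n • ∫ x, φ x ∂μ := by
  have hcomp : ∀ k, ∫ x, φ (S^[k] x) ∂μ = ∫ x, φ x ∂μ := fun k => by
    rw [← integral_map (hS.iterate k).aemeasurable (by rw [(hS.iterate k).map_eq]; exact hφ.1),
      (hS.iterate k).map_eq]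
  simp only [birkhoffSum]
  rw [integral_finsetSum (f := fun k x => φ (S^[k] x)) _
    fun k _ => (hS.iterate k).integrable_comp_of_integrable hφ]
  simp [hcomp]

theorem exists_frequently_le_birkhoffSum_indicator [IsProbabilityMeasure μ]
    (hS : MeasurePreserving S μ μ) {A : Set X} (hA : MeasurableSet A) (hA0 : μ A ≠ 0) :
    ∃ x, ∃ᶠ n in atTop, μ.real A / 2 * n ≤ birkhoffSum S (A.indicator 1) n x := by
  classical
  have hθ : 0 < μ.real A := ENNReal.toReal_pos hA0 (measure_ne_top μ A)
  have hmeas : ∀ n, Measurable (birkhoffSum S (A.indicator (1 : X → ℝ)) n) :=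
    hS.measurable.birkhoffSum (measurable_one.indicator hA)
  have hdense : ∀ n : ℕ, 0 < n →
      μ.real A / 2 ≤ μ.real {x | μ.real A / 2 * n ≤ birkhoffSum S (A.indicator 1) n x} := by
    intro n hn
    have hn' : (0 : ℝ) < n := Nat.cast_pos.2 hn
    have hbound : ∀ x, birkhoffSum S (A.indicator (1 : X → ℝ)) n x ≤ n := fun x => by
      rw [birkhoffSum_indicator_one_eq_card S A]
      exact_mod_cast (Finset.card_filter_le _ _).trans (Finset.card_range n).le
    have h := integral_le_add_mul_measureReal_le (μ := μ) (c := μ.real A / 2 * n) (hmeas n)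
      (fun x => Finset.sum_nonneg fun k _ => Set.indicator_nonneg (fun _ _ => zero_le_one) _)
      (by positivity) hbound
    rw [hS.integral_birkhoffSum (φ := A.indicator 1) ((integrable_const (1 : ℝ)).indicator hA),
      integral_indicator_one hA, nsmul_eq_mul] at h
    nlinarith
  refine exists_frequently_mem_of_le_measure (μ := μ)
    (B := fun n => {x | μ.real A / 2 * n ≤ birkhoffSum S (A.indicator 1) n x})
    (fun n => measurableSet_le measurable_const (hmeas n))
    (ENNReal.ofReal_pos.2 (half_pos hθ)).ne' ((eventually_gt_atTop 0).mono fun n hn => ?_)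
  exact ENNReal.ofReal_le_of_le_toReal (hdense n hn)

end MeasureTheory.MeasurePreserving

namespace Equiv.Perm

variable {X : Type*} (T : Equiv.Perm X) (f : X → ℝ)

def mirrorSet (p : ℤ) : Set X := {y | ∀ j ≤ 0, f ((T ^ j) y) < f ((T ^ (p - j)) y)}

def crossingSet (p : ℤ) (c : ℝ) : Set X :=
  T.mirrorSet f p ∩ {y | f y ≤ c ∧ c < f ((T ^ p) y)}

variable {T f}

theorem setOf_forall_lt_subset_preimage_mirrorSet (N : ℕ) (q : ℤ) :
    {x | ∀ n > N, f ((T⁻¹ ^ n) x) < f ((T ^ ((n : ℤ) + q)) x)} ⊆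
      ⇑(T⁻¹ ^ (N + 1)) ⁻¹' T.mirrorSet f (q + 2 * (N + 1)) := by
  intro y hy j hj
  obtain ⟨i, rfl⟩ : ∃ i : ℕ, j = -i := ⟨j.natAbs, by omega⟩
  have h := hy (N + 1 + i) (by omega)
  simp only [← mul_apply, ← zpow_natCast, inv_zpow', ← zpow_add] at h ⊢
  convert h using 4 <;> push_cast <;> ring

theorem lt_of_mem_mirrorSet {p : ℤ} {y : X} (hy : y ∈ T.mirrorSet f p) :
    f y < f ((T ^ p) y) := by
  simpa using hy 0 le_rfl

theorem not_threeAP_mem_crossingSet {p d : ℤ} (hpd : p ≤ d) {c : ℝ} (k : ℤ) (x : X) :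
    ¬ ((T ^ k) x ∈ T.crossingSet f p c ∧ (T ^ (k + d)) x ∈ T.crossingSet f p c ∧
      (T ^ (k + 2 * d)) x ∈ T.crossingSet f p c) := by
  rintro ⟨⟨-, -, hlow⟩, ⟨hmid, -⟩, ⟨-, hhigh, -⟩⟩
  have h := hmid (p - d) (by omega)
  simp only [← mul_apply, ← zpow_add] at h hlow
  rw [show p - d + (k + d) = p + k by ring, show p - (p - d) + (k + d) = k + 2 * d by ring] at h
  linarith

variable [MeasurableSpace X]

theorem exists_rat_measure_crossingSet_ne_zero (μ : Measure X) {p : ℤ}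
    (hp : μ (T.mirrorSet f p) ≠ 0) : ∃ c : ℚ, μ (T.crossingSet f p c) ≠ 0 := by
  by_contra! h
  refine hp (measure_mono_null (fun y hy => ?_) (measure_iUnion_null_iff.2 h))
  obtain ⟨c, hc₁, hc₂⟩ := exists_rat_btwn (lt_of_mem_mirrorSet hy)
  exact Set.mem_iUnion.2 ⟨c, hy, hc₁.le, hc₂⟩

theorem measurable_zpow (hT : Measurable T) (hT' : Measurable T.symm) (k : ℤ) :
    Measurable ⇑(T ^ k) := by
  induction k using Int.induction_on with
  | zero => exact measurable_id
  | succ k ih => rw [zpow_add_one, coe_mul]; exact ih.comp hT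
  | pred k ih => rw [zpow_sub_one, coe_mul]; exact ih.comp hT'

theorem measurableSet_mirrorSet (hT : Measurable T) (hT' : Measurable T.symm)
    (hf : Measurable f) (p : ℤ) : MeasurableSet (T.mirrorSet f p) := by
  simp only [mirrorSet, Set.ofPred_forall]
  exact .iInter fun j => .iInter fun _ => measurableSet_lt
    (hf.comp (measurable_zpow hT hT' j)) (hf.comp (measurable_zpow hT hT' _))

theorem measurableSet_crossingSet (hT : Measurable T) (hT' : Measurable T.symm)
    (hf : Measurable f) (p : ℤ) (c : ℝ) : MeasurableSet (T.crossingSet f p c) :=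
  (measurableSet_mirrorSet hT hT' hf p).inter ((measurableSet_le hf measurable_const).inter
    (measurableSet_lt measurable_const (hf.comp (measurable_zpow hT hT' p))))

end Equiv.Perm

open Equiv.Perm in
theorem theorem5_no_ultimate_strict_inequality_shifted_general
    {X : Type*} [MeasurableSpace X] (μ : Measure X) [IsProbabilityMeasure μ]
    (T : Equiv.Perm X) (hTmeas' : Measurable (⇑T.symm))
    (hT : Ergodic (⇑T) μ)
    (f : X → ℝ) (hf : Measurable f) (q : ℤ) :
    μ {x | ∃ N : ℕ, ∀ n > N, f ((T⁻¹ ^ n) x) < f ((T ^ ((n : ℤ) + q)) x)} = 0 := by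
  classical
  have hmp : MeasurePreserving T μ μ := hT.toMeasurePreserving
  have hTmeas : Measurable T := hmp.measurable
  rw [Set.ofPred_exists, measure_iUnion_null_iff]
  intro N
  by_contra hN
  set p : ℤ := q + 2 * (N + 1)
  have hback : MeasurePreserving ⇑(T⁻¹ ^ (N + 1)) μ μ := by
    rw [coe_pow]; exact (hmp.symm ⟨T, hTmeas, hTmeas'⟩).iterate _
  have hmirror : μ (T.mirrorSet f p) ≠ 0 := fun h =>
    hN (measure_mono_null (setOf_forall_lt_subset_preimage_mirrorSet N q) (hback.preimage_null h))
  obtain ⟨c, hc⟩ := exists_rat_measure_crossingSet_ne_zero μ hmirror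
  set m : ℕ := p.toNat + 1
  obtain ⟨x, hx⟩ := (hmp.iterate m).exists_frequently_le_birkhoffSum_indicator
    (measurableSet_crossingSet hTmeas hTmeas' hf p c) hc
  simp only [birkhoffSum_indicator_one_eq_card (⇑T)^[m]] at hx
  obtain ⟨a, d, hd, h₀, h₁, h₂⟩ := exists_threeAP_of_frequently_dense
    (half_pos (ENNReal.toReal_pos hc (measure_ne_top μ _))) hx
  have hiter : ∀ k, ((⇑T)^[m])^[k] x = (T ^ ((m * k : ℕ) : ℤ)) x := fun k => by
    rw [← Function.iterate_mul, ← coe_pow, zpow_natCast]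
  rw [hiter] at h₀ h₁ h₂
  have hmd : p ≤ m * d := by have := Nat.le_mul_of_pos_right m hd; omega
  refine not_threeAP_mem_crossingSet (d := m * d) hmd (m * a) x ⟨h₀, ?_, ?_⟩
  · convert h₁ using 3; push_cast; ring
  · convert h₂ using 3; push_cast; ring

/-- **Theorem 5 (asymmetric version).** Let `f` be a measurable function on an
ergodic invertible probability-preserving system `(X, μ, T)` and let `q` be a fixed
integer. The set of points `x` for which the strict inequality
`f(T^{-n} x) < f(T^{n+q} x)` holds for all `n` large enough is negligible:
`μ (⋃_{N>0} ⋂_{n>N} {f ∘ T^{-n} < f ∘ T^{n+q}}) = 0`. -/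
theorem theorem5_no_ultimate_strict_inequality_shifted
    {X : Type*} [MeasurableSpace X] (μ : Measure X) [IsProbabilityMeasure μ]
    (T : Equiv.Perm X) (hTmeas : Measurable (⇑T)) (hTmeas' : Measurable (⇑T.symm))
    (hT : Ergodic (⇑T) μ)
    (f : X → ℝ) (hf : Measurable f) (q : ℤ) :
    μ {x | ∃ N : ℕ, ∀ n > N, f ((T⁻¹ ^ n) x) < f ((T ^ ((n : ℤ) + q)) x)} = 0 :=
  theorem5_no_ultimate_strict_inequality_shifted_general μ T hTmeas' hT f hf q
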